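/- arXiv:2204.05256 — 2 statements merged into one kernel-verified Lean document; each statement's English description precedes it below -/
import Mathlib

section
/- Fix dt ∈ ℝ and let F be the 5×5 real identity matrix except entry (4,5) equal to dt, and Φ_dt(A) = F⁻¹ A F. For ξ = (ξ_R, ξ_v, ξ_x) ∈ ℝ³×ℝ³×ℝ³ let ξ^∧ be the 5×5 matrix with top-left 3×3 block (ξ_R)_×, fourth and fifth columns ξ_v and ξ_x in the first three rows, and zeros in the last two rows. Then F⁻¹ · ξ^∧ · F = (Mξ)^∧ where Mξ = (ξ_R, ξ_v, ξ_x + dt·ξ_v), and consequently for every invertible 5×5 matrix T, Φ_dt(T · exp(ξ^∧)) = Φ_dt(T) · exp((Mξ)^∧). That is, the log-linearity matrix of the automorphism Φ_dt of SE_2(3) is M = [[I₃,0,0],[0,I₃,0],[0, dt·I₃, I₃]]. -/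
open Matrix NormedSpace

/-- The 3×2 matrix whose two columns are `v` and `x`. -/
def colVX (v x : Fin 3 → ℝ) : Matrix (Fin 3) (Fin 2) ℝ :=
  Matrix.of fun i j => ![v i, x i] j

/-- The skew-symmetric cross-product matrix `a_×` of `a ∈ ℝ³`. -/
def skew (a : Fin 3 → ℝ) : Matrix (Fin 3) (Fin 3) ℝ :=
  !![0, -a 2, a 1; a 2, 0, -a 0; -a 1, a 0, 0]

/-- The hat map identifying `ℝ⁹ = ℝ³×ℝ³×ℝ³` with the Lie algebra of `SE₂(3)`:
`ξ^∧ = [ (ξ_R)_×, ξ_v, ξ_x; 0₂ₓ₃, 0₂ₓ₂ ]`. -/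
def hatSE23 (ξR ξv ξx : Fin 3 → ℝ) : Matrix (Fin 3 ⊕ Fin 2) (Fin 3 ⊕ Fin 2) ℝ :=
  Matrix.fromBlocks (skew ξR) (colVX ξv ξx) 0 0

/-- The 5×5 identity matrix except that its (4,5) entry equals `dt`. -/
def Fdt (dt : ℝ) : Matrix (Fin 3 ⊕ Fin 2) (Fin 3 ⊕ Fin 2) ℝ :=
  Matrix.fromBlocks 1 0 0 !![1, dt; 0, 1]

/-- The conjugation map `Φ_dt(A) = F⁻¹ A F`. -/
noncomputable def Phidt (dt : ℝ) (A : Matrix (Fin 3 ⊕ Fin 2) (Fin 3 ⊕ Fin 2) ℝ) :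
    Matrix (Fin 3 ⊕ Fin 2) (Fin 3 ⊕ Fin 2) ℝ :=
  (Fdt dt)⁻¹ * A * Fdt dt

set_option linter.unnecessarySeqFocus false
set_option maxRecDepth 10000

lemma Fdt_unit (dt : ℝ) : IsUnit (Fdt dt) := by
  have : (Fdt dt).det = 1 := by
    rw [Fdt, det_fromBlocks_zero₂₁]
    simp [Matrix.det_fin_two_of]
  rw [Matrix.isUnit_iff_isUnit_det, this]; exact isUnit_one

lemma key (dt : ℝ) (ξR ξv ξx : Fin 3 → ℝ) :
    (Fdt dt)⁻¹ * hatSE23 ξR ξv ξx * Fdt dt = hatSE23 ξR ξv (ξx + dt • ξv) := by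
  have hinv : (Fdt dt)⁻¹ = Fdt (-dt) := by
    apply Matrix.inv_eq_right_inv
    ext (i|i) (j|j) <;> simp [Fdt, Matrix.mul_apply, Fin.sum_univ_succ,
      Matrix.one_apply, Fin.forall_fin_succ] <;>
    · fin_cases i <;> fin_cases j <;> simp
  rw [hinv]
  ext (i|i) (j|j) <;>
    simp [Fdt, hatSE23, Matrix.mul_apply, Fin.sum_univ_succ, colVX, skew,
      Matrix.one_apply, Fintype.sum_sum_type] <;>
  · fin_cases i <;> fin_cases j <;> simp [colVX] <;> ring

/-- **Log-linearity matrix of the automorphism `Φ_dt` of `SE₂(3)`.**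
`F⁻¹ ξ^∧ F = (Mξ)^∧` with `Mξ = (ξ_R, ξ_v, ξ_x + dt·ξ_v)`, and consequently for every
invertible `T`, `Φ_dt(T exp(ξ^∧)) = Φ_dt(T) exp((Mξ)^∧)`; i.e. the log-linearity matrix is
`M = [[I₃,0,0],[0,I₃,0],[0,dt·I₃,I₃]]`. -/
theorem Phidt_log_linearity
    (dt : ℝ) (ξR ξv ξx : Fin 3 → ℝ) :
    (Fdt dt)⁻¹ * hatSE23 ξR ξv ξx * Fdt dt = hatSE23 ξR ξv (ξx + dt • ξv) ∧
    ∀ T : Matrix (Fin 3 ⊕ Fin 2) (Fin 3 ⊕ Fin 2) ℝ, IsUnit T →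
      Phidt dt (T * exp (hatSE23 ξR ξv ξx)) =
        Phidt dt T * exp (hatSE23 ξR ξv (ξx + dt • ξv)) := by
  refine ⟨key dt ξR ξv ξx, fun T _ => ?_⟩
  have h := Matrix.exp_conj' (Fdt dt) (hatSE23 ξR ξv ξx) (Fdt_unit dt)
  rw [key] at h
  rw [Phidt, Phidt, h]
  have hF : Fdt dt * (Fdt dt)⁻¹ = 1 :=
    Matrix.mul_nonsing_inv _ ((Matrix.isUnit_iff_isUnit_det _).mp (Fdt_unit dt))
  simp only [mul_assoc]
  rw [← mul_assoc (Fdt dt) ((Fdt dt)⁻¹), hF, one_mul]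
end

section
/- (Log-linear property of unbiased inertial navigation.) Fix dt ∈ ℝ, ω, a, g ∈ ℝ³. Let Γ, Υ, Φ_dt and the hat map ξ ↦ ξ^∧ be as follows: Γ has SE_2(3) block form with blocks (I₃, dt·g, 0); Υ has SE_2(3) block form with blocks (exp(dt·ω_×), dt·a, 0); Φ_dt(A) = F⁻¹ A F with F the 5×5 identity except entry (4,5) = dt; and for ξ = (ξ_R, ξ_v, ξ_x) ∈ ℝ⁹, ξ^∧ is the 5×5 matrix with top-left block (ξ_R)_×, columns ξ_v and ξ_x in the first three rows of columns 4 and 5, and zero last two rows. Define f(T) = Γ · Φ_dt(T) · Υ. Then for every invertible 5×5 real matrix T and every ξ ∈ ℝ⁹: f(T · exp(ξ^∧)) = f(T) · exp( Υ⁻¹ · (Mξ)^∧ · Υ ), where Mξ = (ξ_R, ξ_v, ξ_x + dt·ξ_v). -/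
open Matrix NormedSpace

/-- The 5×5 extended pose `[R, v, x; 0₂ₓ₃, I₂]` (block indices `Fin 3 ⊕ Fin 2`). -/
def SE23mk (R : Matrix (Fin 3) (Fin 3) ℝ) (v x : Fin 3 → ℝ) :
    Matrix (Fin 3 ⊕ Fin 2) (Fin 3 ⊕ Fin 2) ℝ :=
  Matrix.fromBlocks R (colVX v x) 0 1

lemma colVX_mul (dt : ℝ) (v x : Fin 3 → ℝ) :
    colVX v x * !![1, dt; 0, 1] = colVX v (x + dt • v) := by
  ext i j
  fin_cases j <;> simp [colVX, Matrix.mul_apply, Fin.sum_univ_two] <;> ring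

lemma Fdt_mul_hat (dt : ℝ) (ξR ξv ξx : Fin 3 → ℝ) :
    Fdt dt * hatSE23 ξR ξv (ξx + dt • ξv) = hatSE23 ξR ξv ξx * Fdt dt := by
  simp [Fdt, hatSE23, Matrix.fromBlocks_multiply, colVX_mul]

/-- **Log-linear property of unbiased inertial navigation on `SE₂(3)`.** With
`Γ = [I₃, dt·g, 0; 0, I₂]`, `Υ = [exp(dt·ω_×), dt·a, 0; 0, I₂]` and
`f(T) = Γ · Φ_dt(T) · Υ`, one has for every invertible `T` and `ξ = (ξ_R, ξ_v, ξ_x)`: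
`f(T exp(ξ^∧)) = f(T) exp(Υ⁻¹ (Mξ)^∧ Υ)` where `Mξ = (ξ_R, ξ_v, ξ_x + dt·ξ_v)`. -/
theorem inertial_navigation_log_linear
    (dt : ℝ) (ω a g : Fin 3 → ℝ)
    (Γ Υ : Matrix (Fin 3 ⊕ Fin 2) (Fin 3 ⊕ Fin 2) ℝ)
    (hΓ : Γ = SE23mk 1 (dt • g) 0)
    (hΥ : Υ = SE23mk (exp (dt • skew ω)) (dt • a) 0)
    (f : Matrix (Fin 3 ⊕ Fin 2) (Fin 3 ⊕ Fin 2) ℝ →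
      Matrix (Fin 3 ⊕ Fin 2) (Fin 3 ⊕ Fin 2) ℝ)
    (hf : ∀ T, f T = Γ * Phidt dt T * Υ) :
    ∀ T : Matrix (Fin 3 ⊕ Fin 2) (Fin 3 ⊕ Fin 2) ℝ, IsUnit T →
      ∀ ξR ξv ξx : Fin 3 → ℝ,
        f (T * exp (hatSE23 ξR ξv ξx)) =
          f T * exp (Υ⁻¹ * hatSE23 ξR ξv (ξx + dt • ξv) * Υ) := by
  intro T _ ξR ξv ξx
  have hF : IsUnit (Fdt dt) := Fdt_unit dt
  have hFd : IsUnit (Fdt dt).det := (Matrix.isUnit_iff_isUnit_det _).mp hF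
  have hΥu : IsUnit Υ := by
    rw [hΥ, Matrix.isUnit_iff_isUnit_det, SE23mk, Matrix.det_fromBlocks_zero₂₁,
      Matrix.det_one, mul_one]
    exact (Matrix.isUnit_iff_isUnit_det _).mp (Matrix.isUnit_exp _)
  have hΥd : IsUnit Υ.det := (Matrix.isUnit_iff_isUnit_det _).mp hΥu
  have hconj : (Fdt dt)⁻¹ * hatSE23 ξR ξv ξx * Fdt dt
      = hatSE23 ξR ξv (ξx + dt • ξv) := by
    rw [Matrix.mul_assoc, ← Fdt_mul_hat, ← Matrix.mul_assoc,
      Matrix.nonsing_inv_mul _ hFd, Matrix.one_mul]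
  have hexpM : exp (hatSE23 ξR ξv (ξx + dt • ξv))
      = (Fdt dt)⁻¹ * exp (hatSE23 ξR ξv ξx) * Fdt dt := by
    rw [← hconj, Matrix.exp_conj' _ _ hF]
  rw [hf, hf, Phidt, Phidt, Matrix.exp_conj' _ _ hΥu, hexpM]
  simp only [Matrix.mul_assoc, Matrix.mul_nonsing_inv_cancel_left _ _ hΥd,
    Matrix.mul_nonsing_inv_cancel_left _ _ hFd]
end
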